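/- Fix an integer B ≥ 1. Then ∫_{τ²}^∞ (√x − τ)² x^{B/2−1} e^{−x/2} dx ∼ 4 e^{−τ²/2} τ^{B−4} as τ → ∞, i.e., lim_{τ→∞} e^{τ²/2} τ^{4−B} ∫_{τ²}^∞ (√x − τ)² x^{B/2−1} e^{−x/2} dx = 4. -/

import Mathlib

open MeasureTheory Real Set Filter Topology

/-! The substitution `x = (τ + v / τ)²` moves the lower end `x = τ²` to `v = 0` and turns
`e^{τ²/2} τ^{4-s} ∫_{τ²}^∞ (√x − τ)² x^{s/2−1} e^{−x/2} dx` into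
`∫₀^∞ 2 v² (1 + v/τ²)^{s-1} e^{-v - v²/(2τ²)} dv`. The new integrand tends to `2 v² e^{-v}` and,
since `(1 + u)^p ≤ e^{|p| u}`, is dominated by `2 v² e^{-v/2}` once `τ² ≥ 2 |s - 1|`; dominated
convergence gives the limit `∫₀^∞ 2 v² e^{-v} dv = 2 Γ(3) = 4`. -/

section Substitution

variable {τ : ℝ}

lemma strictMonoOn_sq_add_div (hτ : 0 < τ) :
    StrictMonoOn (fun v : ℝ => (τ + v / τ) ^ 2) (Ici 0) := by
  intro a ha b _ hab
  have : a / τ < b / τ := div_lt_div_of_pos_right hab hτ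
  have : 0 ≤ a / τ := div_nonneg ha hτ.le
  dsimp only
  nlinarith

lemma image_sq_add_div_Ioi_zero (hτ : 0 < τ) :
    (fun v : ℝ => (τ + v / τ) ^ 2) '' Ioi 0 = Ioi (τ ^ 2) := by
  ext x
  constructor
  · rintro ⟨v, hv, rfl⟩
    have : 0 < v / τ := div_pos hv hτ
    simp only [mem_Ioi]
    nlinarith
  · intro hx
    have hτx : τ < √x := by
      simpa [sqrt_sq hτ.le] using sqrt_lt_sqrt (sq_nonneg τ) hx
    refine ⟨(√x - τ) * τ, mul_pos (by linarith) hτ, ?_⟩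
    simp only [mul_div_cancel_right₀ _ hτ.ne', add_sub_cancel]
    exact sq_sqrt ((sq_nonneg τ).trans hx.le)

lemma tail_integrand_comp_sq_add_div (s : ℝ) (hτ : 0 < τ) {v : ℝ} (hv : 0 ≤ v) :
    exp (τ ^ 2 / 2) * τ ^ (4 - s) *
        (|2 * (τ + v / τ) / τ| * ((√((τ + v / τ) ^ 2) - τ) ^ 2 *
          ((τ + v / τ) ^ 2) ^ (s / 2 - 1) * exp (-(τ + v / τ) ^ 2 / 2)))
      = 2 * v ^ 2 * (1 + v / τ ^ 2) ^ (s - 1) * exp (-v - v ^ 2 / (2 * τ ^ 2)) := by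
  have hu : 0 < 1 + v / τ ^ 2 := by positivity
  have ha : τ + v / τ = τ * (1 + v / τ ^ 2) := by field_simp
  have hpow : ((τ + v / τ) ^ 2) ^ (s / 2 - 1)
      = τ ^ (s - 1) * (1 + v / τ ^ 2) ^ (s - 1) / (τ * (1 + v / τ ^ 2)) := by
    have hw : 0 < τ * (1 + v / τ ^ 2) := by positivity
    rw [ha, ← mul_rpow hτ.le hu.le, eq_div_iff hw.ne', ← rpow_natCast, ← rpow_mul hw.le,
      ← rpow_add_one hw.ne']
    congr 1
    ring
  have hτpow : τ ^ (4 - s) * τ ^ (s - 1) = τ ^ 3 := by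
    rw [← rpow_add hτ, ← rpow_natCast]
    norm_num
  have hexp : exp (τ ^ 2 / 2) * exp (-(τ + v / τ) ^ 2 / 2) = exp (-v - v ^ 2 / (2 * τ ^ 2)) := by
    rw [← exp_add]
    congr 1
    field_simp
    ring
  rw [sqrt_sq (by positivity), abs_of_pos (by positivity), hpow, add_sub_cancel_left]
  calc _ = (τ ^ (4 - s) * τ ^ (s - 1)) * (1 + v / τ ^ 2) ^ (s - 1)
          * (2 * (τ + v / τ) / (τ * (1 + v / τ ^ 2)) * (v / τ) ^ 2 / τ)
          * (exp (τ ^ 2 / 2) * exp (-(τ + v / τ) ^ 2 / 2)) := by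
        field_simp
    _ = _ := by
        rw [hτpow, hexp, ha]
        field_simp

lemma exp_mul_rpow_mul_setIntegral_tail_eq (s : ℝ) (hτ : 0 < τ) :
    exp (τ ^ 2 / 2) * τ ^ (4 - s) *
        ∫ x in Ioi (τ ^ 2), (√x - τ) ^ 2 * x ^ (s / 2 - 1) * exp (-x / 2)
      = ∫ v in Ioi 0,
          2 * v ^ 2 * (1 + v / τ ^ 2) ^ (s - 1) * exp (-v - v ^ 2 / (2 * τ ^ 2)) := by
  have hderiv (v : ℝ) :
      HasDerivAt (fun v : ℝ => (τ + v / τ) ^ 2) (2 * (τ + v / τ) / τ) v := by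
    have := (((hasDerivAt_id v).div_const τ).const_add τ).fun_pow 2
    exact this.congr_deriv (by simp only [id, Nat.cast_ofNat]; ring)
  rw [← image_sq_add_div_Ioi_zero hτ,
    integral_image_eq_integral_abs_deriv_smul measurableSet_Ioi
      (fun v _ => (hderiv v).hasDerivWithinAt)
      ((strictMonoOn_sq_add_div hτ).injOn.mono Ioi_subset_Ici_self),
    ← integral_const_mul]
  exact setIntegral_congr_fun measurableSet_Ioi
    fun v hv => tail_integrand_comp_sq_add_div s hτ (le_of_lt hv)

end Substitution

lemma one_add_rpow_le_exp_abs_mul {u : ℝ} (hu : 0 ≤ u) (p : ℝ) :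
    (1 + u) ^ p ≤ exp (|p| * u) := by
  rcases le_total 0 p with hp | hp
  · calc (1 + u) ^ p ≤ exp u ^ p := by
          gcongr
          linarith [add_one_le_exp u]
      _ = exp (|p| * u) := by rw [← exp_mul, abs_of_nonneg hp, mul_comm]
  · exact (rpow_le_one_of_one_le_of_nonpos (by linarith) hp).trans
      (one_le_exp (by positivity))

lemma integral_two_mul_sq_mul_exp_neg :
    ∫ v in Ioi (0 : ℝ), 2 * v ^ 2 * exp (-v) = 4 := by
  have h := integral_rpow_mul_exp_neg_mul_Ioi (a := 3) (r := 1) (by norm_num) one_pos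
  norm_num at h
  simp_rw [mul_assoc, integral_const_mul, h]
  norm_num

lemma integrableOn_sq_mul_exp_neg_half :
    IntegrableOn (fun v : ℝ => v ^ 2 * exp (-v / 2)) (Ioi 0) := by
  have h := integrableOn_rpow_mul_exp_neg_mul_rpow (s := 2) (p := 1) (b := 1 / 2)
    (by norm_num) one_pos (by norm_num)
  refine h.congr_fun (fun v hv => ?_) measurableSet_Ioi
  simp only [rpow_two, rpow_one]
  ring_nf

lemma tendsto_setIntegral_sq_mul_one_add_rpow_mul_exp (p : ℝ) :
    Tendsto (fun τ : ℝ => ∫ v in Ioi 0,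
        2 * v ^ 2 * (1 + v / τ ^ 2) ^ p * exp (-v - v ^ 2 / (2 * τ ^ 2)))
      atTop (𝓝 4) := by
  rw [← integral_two_mul_sq_mul_exp_neg]
  refine tendsto_integral_filter_of_dominated_convergence (fun v => 2 * (v ^ 2 * exp (-v / 2)))
    (Eventually.of_forall fun τ => by fun_prop) ?_
    (integrableOn_sq_mul_exp_neg_half.const_mul 2) ?_
  · have hτ : ∀ᶠ τ : ℝ in atTop, 0 < τ ∧ 2 * |p| ≤ τ ^ 2 :=
      (eventually_gt_atTop 0).and (tendsto_pow_atTop two_ne_zero |>.eventually_ge_atTop _)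
    filter_upwards [hτ] with τ ⟨hτ, hpτ⟩
    rw [ae_restrict_iff' measurableSet_Ioi]
    refine Eventually.of_forall fun v (hv : 0 < v) => ?_
    have hpow := one_add_rpow_le_exp_abs_mul (div_nonneg hv.le (sq_nonneg τ)) p
    have : |p| * (v / τ ^ 2) ≤ v / 2 := by
      rw [mul_div_assoc', div_le_div_iff₀ (by positivity) two_pos]
      nlinarith
    rw [norm_of_nonneg (by positivity)]
    calc _ ≤ 2 * v ^ 2 * exp (|p| * (v / τ ^ 2)) * exp (-v) := by
          gcongr
          linarith [div_nonneg (sq_nonneg v) (by positivity : (0:ℝ) ≤ 2 * τ ^ 2)]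
      _ ≤ 2 * v ^ 2 * exp (v / 2) * exp (-v) := by gcongr
      _ = _ := by rw [mul_assoc, ← exp_add]; ring_nf
  · refine Eventually.of_forall fun v => ?_
    have hinv : Tendsto (fun τ : ℝ => (τ ^ 2)⁻¹) atTop (𝓝 0) :=
      tendsto_inv_atTop_zero.comp (tendsto_pow_atTop two_ne_zero)
    have hcont : ContinuousAt
        (fun ε : ℝ => 2 * v ^ 2 * (1 + v * ε) ^ p * exp (-v - v ^ 2 * ε / 2)) 0 := by
      fun_prop (disch := norm_num)
    convert hcont.tendsto.comp hinv using 2 with τ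
    · simp only [Function.comp_apply]
      ring_nf
    · simp

theorem stmt5 (B : ℕ) :
    Tendsto
      (fun τ : ℝ =>
        Real.exp (τ ^ 2 / 2) * τ ^ ((4 : ℝ) - B) *
          ∫ x in Ioi (τ ^ 2),
            (Real.sqrt x - τ) ^ 2 * x ^ ((B : ℝ) / 2 - 1) * Real.exp (-x / 2))
      atTop (nhds 4) :=
  (tendsto_setIntegral_sq_mul_one_add_rpow_mul_exp ((B : ℝ) - 1)).congr'
    (by filter_upwards [eventually_gt_atTop 0] with τ hτ
        exact (exp_mul_rpow_mul_setIntegral_tail_eq B hτ).symm)
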